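/- Let r > d > 0, (x₀,y₀) ∈ (0,1)², x₀ ≠ y₀. For i,j ∈ ℕ consider F_{i,j}(u) = (x_u)^i (y_u)^j exp(∫₀^u R(x_α,y_α)dα) for u ∈ [0, s₀). Then: if i + j ≥ 2, F_{i,j}(u) → 0 as u → s₀⁻; if i + j = 1, F_{i,j}(u) converges to a finite nonzero limit as u → s₀⁻; and if i = j = 0, |F_{0,0}(u)| → ∞ as u → s₀⁻. -/

import Mathlib

/-- The coefficient `Q(x,y) = (r+d)x − r/2 − (r/2)(x/y) − d·x²`. -/
noncomputable def Qfun (r d x y : ℝ) : ℝ :=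
  (r + d) * x - r / 2 - r / 2 * (x / y) - d * x ^ 2

/-- The coefficient `R(x,y) = r/(2x) + r/(2y) − d·x − d·y`. -/
noncomputable def Rfun (r d x y : ℝ) : ℝ :=
  r / (2 * x) + r / (2 * y) - d * x - d * y

/-- The integration constant `λ = (2d·x₀y₀ − d(x₀+y₀))/((x₀−y₀)(r−d))`. -/
noncomputable def lamOf (r d x₀ y₀ : ℝ) : ℝ :=
  (2 * d * x₀ * y₀ - d * (x₀ + y₀)) / ((x₀ - y₀) * (r - d))

/-- The integration constant `μ = (−2d·x₀y₀ + r(x₀+y₀))/((x₀−y₀)(r−d))`. -/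
noncomputable def muOf (r d x₀ y₀ : ℝ) : ℝ :=
  (-(2 * d * x₀ * y₀) + r * (x₀ + y₀)) / ((x₀ - y₀) * (r - d))

/-- The characteristic curve `x_s = (λre^{rs} + μde^{ds})/(d(λe^{rs} + μe^{ds} + 1))`. -/
noncomputable def xChar (r d lam mu s : ℝ) : ℝ :=
  (lam * r * Real.exp (r * s) + mu * d * Real.exp (d * s))
    / (d * (lam * Real.exp (r * s) + mu * Real.exp (d * s) + 1))

/-- The characteristic curve `y_s = (λre^{rs} + μde^{ds})/(d(λe^{rs} + μe^{ds} − 1))`. -/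
noncomputable def yChar (r d lam mu s : ℝ) : ℝ :=
  (lam * r * Real.exp (r * s) + mu * d * Real.exp (d * s))
    / (d * (lam * Real.exp (r * s) + mu * Real.exp (d * s) - 1))

/-- The time `s₀ = log((x₀ + y₀ − 2x₀y₀)/(x₀ + y₀ − 2(d/r)x₀y₀))/(d − r)`. -/
noncomputable def s0Of (r d x₀ y₀ : ℝ) : ℝ :=
  Real.log ((x₀ + y₀ - 2 * x₀ * y₀) / (x₀ + y₀ - 2 * (d / r) * x₀ * y₀)) / (d - r)

open Filter MeasureTheory

/-! With `D = λe^{rs} + μe^{ds}` and `N = D'`, the curves are `x = N / (d(D + 1))` and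
`y = N / (d(D - 1))`. Since `D` solves `D'' = (r + d)D' - rdD`, this gives
`R(x, y) = (r + d) - N'/N - (D² - 1)'/(D² - 1)`, hence
`exp ∫₀^u R = e^{(r+d)u} · (N 0 / N u) · (D(0)² - 1)/(D(u)² - 1)` and
`F_{i,j} = N^{i+j-1} · K_{i,j}` with `K_{i,j}` continuous and nonzero wherever `D² ≠ 1`.

For the given `λ, μ`, `N` is a nonzero multiple of `B e^{ds} - A e^{rs}` with
`A = x₀ + y₀ - 2x₀y₀ < B = x₀ + y₀ - 2(d/r)x₀y₀`, whose first positive zero is `s₀`; and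
`(x₀ - y₀)(r - d) · D = rB e^{ds} - dA e^{rs}` increases on `[0, s₀]` from
`(r - d)(x₀ + y₀) > |x₀ - y₀|(r - d)`, so `D² > 1` there. The three cases are then the behaviour
of `N^{i+j-1}` as `N → 0`. -/

open Set Topology

noncomputable def expSum (a b p q s : ℝ) : ℝ :=
  p * Real.exp (a * s) + q * Real.exp (b * s)

section ExpSum

variable (a b p q : ℝ)

theorem hasDerivAt_expSum (s : ℝ) :
    HasDerivAt (expSum a b p q) (expSum a b (p * a) (q * b) s) s := by
  have hexp (c : ℝ) : HasDerivAt (fun s => Real.exp (c * s)) (Real.exp (c * s) * c) s :=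
    ((hasDerivAt_id s).const_mul c).exp.congr_deriv (by simp)
  exact (((hexp a).const_mul p).add ((hexp b).const_mul q)).congr_deriv
    (by simp only [expSum]; ring)

@[fun_prop]
theorem continuous_expSum : Continuous (expSum a b p q) := by
  unfold expSum; fun_prop

theorem expSum_mul_mul (s : ℝ) :
    expSum a b (p * a * a) (q * b * b) s
      = (a + b) * expSum a b (p * a) (q * b) s - a * b * expSum a b p q s := by
  simp only [expSum]; ring

theorem expSum_const_mul (c s : ℝ) : expSum a b (c * p) (c * q) s = c * expSum a b p q s := by
  simp only [expSum]; ring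

end ExpSum

theorem add_one_ne_zero_and_sub_one_ne_zero {R : Type*} [Ring R] [NoZeroDivisors R] {D : R}
    (hD : D ^ 2 ≠ 1) : D + 1 ≠ 0 ∧ D - 1 ≠ 0 :=
  ⟨add_eq_zero_iff_eq_neg.not.2 (sq_ne_one_iff.1 hD).2, sub_ne_zero.2 (sq_ne_one_iff.1 hD).1⟩

theorem Rfun_div_div {r d N D : ℝ} (hd : d ≠ 0) (hN : N ≠ 0) (hD : D ^ 2 ≠ 1) :
    Rfun r d (N / (d * (D + 1))) (N / (d * (D - 1))) = r * d * D / N - 2 * D * N / (D ^ 2 - 1) := by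
  obtain ⟨hDp, hDm⟩ := add_one_ne_zero_and_sub_one_ne_zero hD
  have hD2 : D ^ 2 - 1 ≠ 0 := sub_ne_zero.2 hD
  rw [Rfun]
  field_simp
  ring

section Characteristic

variable (r d lam mu : ℝ)

theorem xChar_eq (s : ℝ) :
    xChar r d lam mu s = expSum r d (lam * r) (mu * d) s / (d * (expSum r d lam mu s + 1)) :=
  rfl

theorem yChar_eq (s : ℝ) :
    yChar r d lam mu s = expSum r d (lam * r) (mu * d) s / (d * (expSum r d lam mu s - 1)) :=
  rfl

theorem Rfun_xChar_yChar (hd : d ≠ 0) {s : ℝ} (hN : expSum r d (lam * r) (mu * d) s ≠ 0)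
    (hD : expSum r d lam mu s ^ 2 ≠ 1) :
    Rfun r d (xChar r d lam mu s) (yChar r d lam mu s)
      = r + d - expSum r d (lam * r * r) (mu * d * d) s / expSum r d (lam * r) (mu * d) s
        - 2 * expSum r d lam mu s * expSum r d (lam * r) (mu * d) s
          / (expSum r d lam mu s ^ 2 - 1) := by
  rw [xChar_eq, yChar_eq, Rfun_div_div hd hN hD, expSum_mul_mul]
  set N := expSum r d (lam * r) (mu * d) s
  set D := expSum r d lam mu s
  field_simp
  ring

theorem integral_Rfun_xChar_yChar (hd : d ≠ 0) {u : ℝ} (hu : 0 ≤ u)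
    (hN : ∀ t ∈ Icc 0 u, expSum r d (lam * r) (mu * d) t ≠ 0)
    (hD : ∀ t ∈ Icc 0 u, expSum r d lam mu t ^ 2 ≠ 1) :
    ∫ α in (0 : ℝ)..u, Rfun r d (xChar r d lam mu α) (yChar r d lam mu α)
      = (r + d) * u + Real.log (expSum r d (lam * r) (mu * d) 0 / expSum r d (lam * r) (mu * d) u)
        + Real.log ((expSum r d lam mu 0 ^ 2 - 1) / (expSum r d lam mu u ^ 2 - 1)) := by
  set N := expSum r d (lam * r) (mu * d)
  set D := expSum r d lam mu
  set N' := expSum r d (lam * r * r) (mu * d * d)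
  have hD' : ∀ t ∈ Icc 0 u, D t ^ 2 - 1 ≠ 0 := fun t ht => sub_ne_zero.2 (hD t ht)
  have hderiv : ∀ t ∈ Icc 0 u, HasDerivAt
      (fun s => (r + d) * s - Real.log (N s) - Real.log (D s ^ 2 - 1))
      (Rfun r d (xChar r d lam mu t) (yChar r d lam mu t)) t := by
    intro t ht
    rw [Rfun_xChar_yChar r d lam mu hd (hN t ht) (hD t ht)]
    have hD2 : HasDerivAt (fun s => D s ^ 2 - 1) (2 * D t * N t) t :=
      (((hasDerivAt_expSum r d lam mu t).pow 2).sub_const 1).congr_deriv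
        (by rw [Nat.add_one_sub_one, pow_one]; push_cast; ring)
    exact ((((hasDerivAt_id t).const_mul (r + d)).congr_deriv (mul_one _)).sub
      ((hasDerivAt_expSum r d (lam * r) (mu * d) t).log (hN t ht))).sub (hD2.log (hD' t ht))
  have hcont : ContinuousOn (fun t => Rfun r d (xChar r d lam mu t) (yChar r d lam mu t))
      (Icc 0 u) := by
    refine ContinuousOn.congr (f := fun t => r + d - N' t / N t - 2 * D t * N t / (D t ^ 2 - 1))
      ?_ fun t ht => Rfun_xChar_yChar r d lam mu hd (hN t ht) (hD t ht)
    fun_prop (disch := assumption)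
  have h0 : (0 : ℝ) ∈ Icc 0 u := left_mem_Icc.2 hu
  have hu' : u ∈ Icc 0 u := right_mem_Icc.2 hu
  rw [intervalIntegral.integral_eq_sub_of_hasDerivAt (by rwa [uIcc_of_le hu])
    (by rw [← uIcc_of_le hu] at hcont; exact hcont.intervalIntegrable),
    Real.log_div (hN 0 h0) (hN u hu'), Real.log_div (hD' 0 h0) (hD' u hu')]
  ring

theorem exp_integral_Rfun_xChar_yChar (hd : d ≠ 0) {u : ℝ} (hu : 0 ≤ u)
    (hN : ∀ t ∈ Icc 0 u, 0 < expSum r d (lam * r) (mu * d) 0 / expSum r d (lam * r) (mu * d) t)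
    (hD : ∀ t ∈ Icc 0 u, 1 < expSum r d lam mu t ^ 2) :
    Real.exp (∫ α in (0 : ℝ)..u, Rfun r d (xChar r d lam mu α) (yChar r d lam mu α))
      = Real.exp ((r + d) * u)
        * (expSum r d (lam * r) (mu * d) 0 / expSum r d (lam * r) (mu * d) u)
        * ((expSum r d lam mu 0 ^ 2 - 1) / (expSum r d lam mu u ^ 2 - 1)) := by
  have h0 : (0 : ℝ) ∈ Icc 0 u := left_mem_Icc.2 hu
  have hu' : u ∈ Icc 0 u := right_mem_Icc.2 hu
  rw [integral_Rfun_xChar_yChar r d lam mu hd hu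
      (fun t ht h => (hN t ht).ne' (by rw [h, div_zero]))
      (fun t ht => (hD t ht).ne'),
    Real.exp_add, Real.exp_add, Real.exp_log (hN u hu'),
    Real.exp_log (div_pos (sub_pos.2 (hD 0 h0)) (sub_pos.2 (hD u hu')))]

noncomputable def charFactor (i j : ℕ) (u : ℝ) : ℝ :=
  Real.exp ((r + d) * u) * (expSum r d (lam * r) (mu * d) 0 * (expSum r d lam mu 0 ^ 2 - 1))
    / (d ^ (i + j) * (expSum r d lam mu u + 1) ^ i * (expSum r d lam mu u - 1) ^ j
        * (expSum r d lam mu u ^ 2 - 1))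

theorem xChar_pow_mul_yChar_pow_mul_exp_integral (hd : d ≠ 0) {u : ℝ} (hu : 0 ≤ u)
    (hN : ∀ t ∈ Icc 0 u, 0 < expSum r d (lam * r) (mu * d) 0 / expSum r d (lam * r) (mu * d) t)
    (hD : ∀ t ∈ Icc 0 u, 1 < expSum r d lam mu t ^ 2) (i j : ℕ) :
    xChar r d lam mu u ^ i * yChar r d lam mu u ^ j *
        Real.exp (∫ α in (0 : ℝ)..u, Rfun r d (xChar r d lam mu α) (yChar r d lam mu α))
      = expSum r d (lam * r) (mu * d) u ^ (i + j) / expSum r d (lam * r) (mu * d) u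
        * charFactor r d lam mu i j u := by
  have hu' : u ∈ Icc 0 u := right_mem_Icc.2 hu
  rw [exp_integral_Rfun_xChar_yChar r d lam mu hd hu hN hD, xChar_eq, yChar_eq, charFactor]
  set N := expSum r d (lam * r) (mu * d)
  set D := expSum r d lam mu
  have hNu : N u ≠ 0 := fun h => (hN u hu').ne' (by rw [h, div_zero])
  have hN0 : N 0 ≠ 0 := fun h => (hN u hu').ne' (by rw [h, zero_div])
  obtain ⟨hDp, hDm⟩ := add_one_ne_zero_and_sub_one_ne_zero (hD u hu').ne'
  have hD2 : D u ^ 2 - 1 ≠ 0 := (sub_pos.2 (hD u hu')).ne'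
  rw [div_pow, div_pow, mul_pow, mul_pow]
  field_simp
  ring

theorem continuousAt_charFactor (hd : d ≠ 0) (i j : ℕ) {s : ℝ} (hD : expSum r d lam mu s ^ 2 ≠ 1) :
    ContinuousAt (charFactor r d lam mu i j) s := by
  obtain ⟨hDp, hDm⟩ := add_one_ne_zero_and_sub_one_ne_zero hD
  have hD2 : expSum r d lam mu s ^ 2 - 1 ≠ 0 := sub_ne_zero.2 hD
  unfold charFactor
  fun_prop (disch := simp [*])

theorem charFactor_ne_zero (hd : d ≠ 0) (i j : ℕ) {s : ℝ}
    (hN : expSum r d (lam * r) (mu * d) 0 ≠ 0) (hD₀ : expSum r d lam mu 0 ^ 2 ≠ 1)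
    (hD : expSum r d lam mu s ^ 2 ≠ 1) : charFactor r d lam mu i j s ≠ 0 := by
  obtain ⟨hDp, hDm⟩ := add_one_ne_zero_and_sub_one_ne_zero hD
  have hD2 : expSum r d lam mu s ^ 2 - 1 ≠ 0 := sub_ne_zero.2 hD
  have hD₀2 : expSum r d lam mu 0 ^ 2 - 1 ≠ 0 := sub_ne_zero.2 hD₀
  unfold charFactor
  positivity

end Characteristic

/- `N u ^ n / N u` rather than `N u ^ (n - 1)`: at `n = 0` it is `1 / N u`, where the truncated
subtraction would give `1`. -/
theorem limits_of_eventuallyEq_pow_div_self_mul {α : Type*} {l : Filter α} {N K F : α → ℝ}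
    {k : ℝ} {n : ℕ} (hN : Tendsto N l (𝓝 0)) (hN0 : ∀ᶠ u in l, N u ≠ 0)
    (hK : Tendsto K l (𝓝 k)) (hk : k ≠ 0) (hF : F =ᶠ[l] fun u => N u ^ n / N u * K u) :
    (2 ≤ n → Tendsto F l (𝓝 0)) ∧ (n = 1 → Tendsto F l (𝓝 k)) ∧
      (n = 0 → Tendsto (fun u => |F u|) l atTop) := by
  refine ⟨fun hn => ?_, fun hn => ?_, fun hn => ?_⟩
  · have hlim : Tendsto (fun u => N u ^ (n - 1) * K u) l (𝓝 0) := by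
      simpa [zero_pow (by omega : n - 1 ≠ 0)] using (hN.pow (n - 1)).mul hK
    refine hlim.congr' ?_
    filter_upwards [hF, hN0] with u hFu hu
    rw [hFu, ← pow_sub_one_mul (by omega : n ≠ 0), mul_div_assoc, div_self hu, mul_one]
  · refine hK.congr' ?_
    filter_upwards [hF, hN0] with u hFu hu
    rw [hFu, hn, pow_one, div_self hu, one_mul]
  · have habs : Tendsto (fun u => |N u|) l (𝓝[>] 0) :=
      tendsto_nhdsWithin_of_tendsto_nhds_of_eventually_within _ (by simpa using hN.abs)
        (hN0.mono fun u hu => abs_pos.2 hu)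
    refine (Tendsto.pos_mul_atTop (abs_pos.2 hk) hK.abs
      (tendsto_inv_nhdsGT_zero.comp habs)).congr' ?_
    filter_upwards [hF] with u hFu
    rw [hFu, hn, pow_zero, abs_mul, abs_div, abs_one, one_div, mul_comm]
    rfl

section FirstZero

variable {r d A B : ℝ}

theorem exp_mul_log_div_div (hrd : d ≠ r) (hA : 0 < A) (hB : 0 < B) :
    Real.exp ((d - r) * (Real.log (A / B) / (d - r))) = A / B := by
  rw [mul_div_cancel₀ _ (sub_ne_zero.2 hrd), Real.exp_log (div_pos hA hB)]

theorem expSum_neg_eq_exp_mul (s : ℝ) :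
    expSum r d (-A) B s = Real.exp (r * s) * (B * Real.exp ((d - r) * s) - A) := by
  rw [expSum, sub_mul, Real.exp_sub]
  field_simp
  ring

theorem expSum_neg_pos (hrd : d < r) (hA : 0 < A) (hB : 0 < B) {s : ℝ}
    (hs : s < Real.log (A / B) / (d - r)) : 0 < expSum r d (-A) B s := by
  rw [expSum_neg_eq_exp_mul]
  refine mul_pos (Real.exp_pos _) (sub_pos.2 ?_)
  rw [← div_lt_iff₀' hB, ← exp_mul_log_div_div hrd.ne hA hB, Real.exp_lt_exp]
  exact mul_lt_mul_of_neg_left hs (sub_neg.2 hrd)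

theorem expSum_neg_log_div_eq_zero (hrd : d ≠ r) (hA : 0 < A) (hB : 0 < B) :
    expSum r d (-A) B (Real.log (A / B) / (d - r)) = 0 := by
  rw [expSum_neg_eq_exp_mul, exp_mul_log_div_div hrd hA hB, mul_div_cancel₀ _ hB.ne', sub_self,
    mul_zero]

theorem monotoneOn_expSum (hd : 0 < d) (hrd : d < r) (hA : 0 < A) (hB : 0 < B) :
    MonotoneOn (expSum r d (-(d * A)) (r * B)) (Iic (Real.log (A / B) / (d - r))) := by
  refine monotoneOn_of_deriv_nonneg (convex_Iic _) (continuous_expSum _ _ _ _).continuousOn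
    (fun s _ => (hasDerivAt_expSum _ _ _ _ s).differentiableAt.differentiableWithinAt)
    fun s hs => ?_
  rw [interior_Iic] at hs
  rw [(hasDerivAt_expSum _ _ _ _ s).deriv,
    show -(d * A) * r = d * r * -A by ring, show r * B * d = d * r * B by ring, expSum_const_mul]
  exact mul_nonneg (mul_pos hd (hd.trans hrd)).le (expSum_neg_pos hrd hA hB hs).le

end FirstZero

noncomputable def s0Num (x₀ y₀ : ℝ) : ℝ := x₀ + y₀ - 2 * x₀ * y₀

noncomputable def s0Den (r d x₀ y₀ : ℝ) : ℝ := x₀ + y₀ - 2 * (d / r) * x₀ * y₀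

section Explicit

variable {r d x₀ y₀ : ℝ}

theorem s0Of_eq : s0Of r d x₀ y₀ = Real.log (s0Num x₀ y₀ / s0Den r d x₀ y₀) / (d - r) := rfl

theorem s0Num_pos (hx₀ : x₀ ∈ Ioo 0 1) (hy₀ : y₀ ∈ Ioo 0 1) : 0 < s0Num x₀ y₀ := by
  obtain ⟨hx0, hx1⟩ := hx₀
  obtain ⟨hy0, hy1⟩ := hy₀
  rw [s0Num]
  nlinarith [mul_pos hx0 (sub_pos.2 hy1), mul_pos hy0 (sub_pos.2 hx1)]

theorem s0Num_lt_s0Den (hd : 0 < d) (hrd : d < r) (hx₀ : 0 < x₀) (hy₀ : 0 < y₀) :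
    s0Num x₀ y₀ < s0Den r d x₀ y₀ := by
  have hdr : d / r < 1 := (div_lt_one (hd.trans hrd)).2 hrd
  rw [s0Num, s0Den]
  nlinarith [mul_pos (mul_pos hx₀ hy₀) (sub_pos.2 hdr)]

theorem s0Of_pos (hd : 0 < d) (hrd : d < r) (hx₀ : x₀ ∈ Ioo 0 1) (hy₀ : y₀ ∈ Ioo 0 1) :
    0 < s0Of r d x₀ y₀ := by
  have hnum := s0Num_pos hx₀ hy₀
  have hlt := s0Num_lt_s0Den hd hrd hx₀.1 hy₀.1
  exact div_pos_of_neg_of_neg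
    (Real.log_neg (div_pos hnum (hnum.trans hlt)) ((div_lt_one (hnum.trans hlt)).2 hlt))
    (sub_neg.2 hrd)

theorem lamOf_eq :
    lamOf r d x₀ y₀ = ((x₀ - y₀) * (r - d))⁻¹ * -(d * s0Num x₀ y₀) := by
  rw [lamOf, s0Num, div_eq_inv_mul]
  ring

theorem muOf_eq (hr : r ≠ 0) :
    muOf r d x₀ y₀ = ((x₀ - y₀) * (r - d))⁻¹ * (r * s0Den r d x₀ y₀) := by
  rw [muOf, s0Den, div_eq_inv_mul]
  field_simp
  ring

theorem expSum_lamOf_muOf (hr : r ≠ 0) (s : ℝ) :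
    expSum r d (lamOf r d x₀ y₀) (muOf r d x₀ y₀) s
      = ((x₀ - y₀) * (r - d))⁻¹ * expSum r d (-(d * s0Num x₀ y₀)) (r * s0Den r d x₀ y₀) s := by
  rw [lamOf_eq, muOf_eq hr, expSum_const_mul]

theorem expSum_lamOf_mul_muOf_mul (hr : r ≠ 0) (s : ℝ) :
    expSum r d (lamOf r d x₀ y₀ * r) (muOf r d x₀ y₀ * d) s
      = ((x₀ - y₀) * (r - d))⁻¹ * (d * r) * expSum r d (-s0Num x₀ y₀) (s0Den r d x₀ y₀) s := by
  rw [lamOf_eq, muOf_eq hr]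
  simp only [expSum]
  ring

theorem expSum_lamOf_mul_muOf_mul_s0Of (hd : 0 < d) (hrd : d < r) (hx₀ : x₀ ∈ Ioo 0 1)
    (hy₀ : y₀ ∈ Ioo 0 1) :
    expSum r d (lamOf r d x₀ y₀ * r) (muOf r d x₀ y₀ * d) (s0Of r d x₀ y₀) = 0 := by
  have hnum := s0Num_pos hx₀ hy₀
  rw [expSum_lamOf_mul_muOf_mul (hd.trans hrd).ne', s0Of_eq,
    expSum_neg_log_div_eq_zero hrd.ne hnum (hnum.trans (s0Num_lt_s0Den hd hrd hx₀.1 hy₀.1)),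
    mul_zero]

theorem div_expSum_lamOf_mul_muOf_mul_pos (hd : 0 < d) (hrd : d < r) (hx₀ : x₀ ∈ Ioo 0 1)
    (hy₀ : y₀ ∈ Ioo 0 1) (hne : x₀ ≠ y₀) {t : ℝ} (ht : t < s0Of r d x₀ y₀) :
    0 < expSum r d (lamOf r d x₀ y₀ * r) (muOf r d x₀ y₀ * d) 0
      / expSum r d (lamOf r d x₀ y₀ * r) (muOf r d x₀ y₀ * d) t := by
  have hr : r ≠ 0 := (hd.trans hrd).ne'
  have hnum := s0Num_pos hx₀ hy₀
  have hden := hnum.trans (s0Num_lt_s0Den hd hrd hx₀.1 hy₀.1)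
  have hc : ((x₀ - y₀) * (r - d))⁻¹ * (d * r) ≠ 0 := by
    have := sub_ne_zero.2 hne
    have := (sub_pos.2 hrd).ne'
    have := hd.ne'
    positivity
  rw [expSum_lamOf_mul_muOf_mul hr, expSum_lamOf_mul_muOf_mul hr, mul_div_mul_left _ _ hc]
  exact div_pos (expSum_neg_pos hrd hnum hden (s0Of_pos hd hrd hx₀ hy₀))
    (expSum_neg_pos hrd hnum hden ht)

theorem one_lt_sq_expSum_lamOf_muOf (hd : 0 < d) (hrd : d < r) (hx₀ : x₀ ∈ Ioo 0 1)
    (hy₀ : y₀ ∈ Ioo 0 1) (hne : x₀ ≠ y₀) {t : ℝ} (ht : t ∈ Icc 0 (s0Of r d x₀ y₀)) :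
    1 < expSum r d (lamOf r d x₀ y₀) (muOf r d x₀ y₀) t ^ 2 := by
  have hr : r ≠ 0 := (hd.trans hrd).ne'
  have hnum := s0Num_pos hx₀ hy₀
  have hden := hnum.trans (s0Num_lt_s0Den hd hrd hx₀.1 hy₀.1)
  have hΔ : (x₀ - y₀) * (r - d) ≠ 0 := mul_ne_zero (sub_ne_zero.2 hne) (sub_pos.2 hrd).ne'
  set h := expSum r d (-(d * s0Num x₀ y₀)) (r * s0Den r d x₀ y₀)
  have hh0 : h 0 = (x₀ + y₀) * (r - d) := by
    simp only [h, expSum, s0Num, s0Den, mul_zero, Real.exp_zero]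
    field_simp
    ring
  have hmono : h 0 ≤ h t :=
    monotoneOn_expSum hd hrd hnum hden (s0Of_pos hd hrd hx₀ hy₀).le ht.2 ht.1
  have hΔlt : |(x₀ - y₀) * (r - d)| < h 0 := by
    rw [hh0, abs_mul, abs_of_pos (sub_pos.2 hrd)]
    exact mul_lt_mul_of_pos_right
      (abs_sub_lt_iff.2 ⟨by linarith [hy₀.1], by linarith [hx₀.1]⟩) (sub_pos.2 hrd)
  rw [expSum_lamOf_muOf hr, mul_pow, inv_pow, ← div_eq_inv_mul, one_lt_div (by positivity),
    sq_lt_sq]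
  exact hΔlt.trans_le (hmono.trans (le_abs_self _))

theorem xChar_pow_mul_yChar_pow_mul_exp_integral_eventuallyEq (hd : 0 < d) (hrd : d < r)
    (hx₀ : x₀ ∈ Ioo 0 1) (hy₀ : y₀ ∈ Ioo 0 1) (hne : x₀ ≠ y₀) (i j : ℕ) :
    (fun u => xChar r d (lamOf r d x₀ y₀) (muOf r d x₀ y₀) u ^ i
        * yChar r d (lamOf r d x₀ y₀) (muOf r d x₀ y₀) u ^ j
        * Real.exp (∫ α in (0 : ℝ)..u, Rfun r d (xChar r d (lamOf r d x₀ y₀) (muOf r d x₀ y₀) α)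
            (yChar r d (lamOf r d x₀ y₀) (muOf r d x₀ y₀) α)))
      =ᶠ[𝓝[<] s0Of r d x₀ y₀] fun u =>
        expSum r d (lamOf r d x₀ y₀ * r) (muOf r d x₀ y₀ * d) u ^ (i + j)
          / expSum r d (lamOf r d x₀ y₀ * r) (muOf r d x₀ y₀ * d) u
          * charFactor r d (lamOf r d x₀ y₀) (muOf r d x₀ y₀) i j u := by
  filter_upwards [Ioo_mem_nhdsLT (s0Of_pos hd hrd hx₀ hy₀)] with u hu
  exact xChar_pow_mul_yChar_pow_mul_exp_integral _ _ _ _ hd.ne' hu.1.le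
    (fun t ht => div_expSum_lamOf_mul_muOf_mul_pos hd hrd hx₀ hy₀ hne (ht.2.trans_lt hu.2))
    (fun t ht => one_lt_sq_expSum_lamOf_muOf hd hrd hx₀ hy₀ hne ⟨ht.1, ht.2.trans hu.2.le⟩) i j

end Explicit

/-- behavior as `u → s₀⁻` of
`F_{i,j}(u) = x_u^i · y_u^j · exp(∫₀^u R(x_α,y_α)dα)`: it tends to `0` if `i + j ≥ 2`, to
a finite nonzero limit if `i + j = 1`, and `|F_{0,0}(u)| → ∞` if `i = j = 0`. -/
theorem F_ij_limit_at_s0 (r d x₀ y₀ : ℝ) (hd : 0 < d) (hrd : d < r)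
    (hx₀ : x₀ ∈ Set.Ioo (0 : ℝ) 1) (hy₀ : y₀ ∈ Set.Ioo (0 : ℝ) 1) (hne : x₀ ≠ y₀)
    (X Y : ℝ → ℝ)
    (hX : X = fun s => xChar r d (lamOf r d x₀ y₀) (muOf r d x₀ y₀) s)
    (hY : Y = fun s => yChar r d (lamOf r d x₀ y₀) (muOf r d x₀ y₀) s)
    (F : ℕ → ℕ → ℝ → ℝ)
    (hF : F = fun i j u =>
      X u ^ i * Y u ^ j * Real.exp (∫ α in (0 : ℝ)..u, Rfun r d (X α) (Y α))) :
    ∀ i j : ℕ,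
      (2 ≤ i + j →
        Tendsto (F i j) (nhdsWithin (s0Of r d x₀ y₀) (Set.Iio (s0Of r d x₀ y₀)))
          (nhds 0)) ∧
      (i + j = 1 →
        ∃ L : ℝ, L ≠ 0 ∧
          Tendsto (F i j) (nhdsWithin (s0Of r d x₀ y₀) (Set.Iio (s0Of r d x₀ y₀)))
            (nhds L)) ∧
      (i = 0 → j = 0 →
        Tendsto (fun u => |F i j u|)
          (nhdsWithin (s0Of r d x₀ y₀) (Set.Iio (s0Of r d x₀ y₀))) atTop) := by
  subst hX hY hF
  intro i j
  set s₀ := s0Of r d x₀ y₀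
  set N := expSum r d (lamOf r d x₀ y₀ * r) (muOf r d x₀ y₀ * d)
  have hs₀ : 0 < s₀ := s0Of_pos hd hrd hx₀ hy₀
  have hD (t : ℝ) (ht : t ∈ Icc 0 s₀) := one_lt_sq_expSum_lamOf_muOf hd hrd hx₀ hy₀ hne ht
  have hN : Tendsto N (𝓝[<] s₀) (𝓝 0) := by
    have h : Tendsto N (𝓝[<] s₀) (𝓝 (N s₀)) :=
      (continuous_expSum _ _ _ _).continuousAt.continuousWithinAt
    rwa [show N s₀ = 0 from expSum_lamOf_mul_muOf_mul_s0Of hd hrd hx₀ hy₀] at h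
  have hN0 : ∀ᶠ u in 𝓝[<] s₀, N u ≠ 0 := by
    filter_upwards [self_mem_nhdsWithin] with u (hu : u < s₀) h
    exact (div_expSum_lamOf_mul_muOf_mul_pos hd hrd hx₀ hy₀ hne hu).ne' (by simp [N, h])
  have hK := ((continuousAt_charFactor r d _ _ hd.ne' i j
    (hD s₀ ⟨hs₀.le, le_rfl⟩).ne').continuousWithinAt (s := Iio s₀)).tendsto
  have hk := charFactor_ne_zero r d _ _ hd.ne' i j
    (fun h => (div_expSum_lamOf_mul_muOf_mul_pos hd hrd hx₀ hy₀ hne hs₀).ne' (by simp [h]))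
    (hD 0 ⟨le_rfl, hs₀.le⟩).ne' (hD s₀ ⟨hs₀.le, le_rfl⟩).ne'
  obtain ⟨h2, h1, h0⟩ :=
    limits_of_eventuallyEq_pow_div_self_mul hN hN0 hK hk
      (xChar_pow_mul_yChar_pow_mul_exp_integral_eventuallyEq hd hrd hx₀ hy₀ hne i j)
  exact ⟨h2, fun hij => ⟨_, hk, h1 hij⟩, fun hi hj => h0 (by omega)⟩
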